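/- arXiv:1809.06880 — 3 statements merged into one kernel-verified Lean document; each statement's English description precedes it below -/
import Mathlib

section
/- For density matrices ρ and σ with strictly positive diagonals, the trimming operation is multiplicative under tensor products: (ρ ⊗ σ)‾ = ρ̄ ⊗ σ̄, where X̄ denotes the matrix obtained from X by keeping only the entries X_{ij} with |X_{ij}| = √(X_{ii}X_{jj}) and setting the others to zero. -/
/-!
For a positive semidefinite `X`, the 2×2 principal minors give `‖X i k‖ ≤ √(X i i * X k k)`.
An entry of `ρ ⊗ₖ σ` is a product `ρ i k * σ j l` of two numbers each bounded in this way, and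
the bound for the product is the product of the bounds. So the product attains its bound when
both factors attain theirs; conversely, if it attains its bound while one factor stays strictly
below its own, the other factor must vanish, and both sides of the identity are `0` there.
-/

open scoped ComplexOrder
open Kronecker
open scoped Classical

noncomputable def trim {n : Type*} [Fintype n] (ρ : Matrix n n ℂ) :
    Matrix n n ℂ :=
  Matrix.of fun i j =>
    if ‖ρ i j‖ = Real.sqrt ((ρ i i).re * (ρ j j).re) then ρ i j else 0

open Matrix

namespace Matrix.PosSemidef

variable {n : Type*} {M : Matrix n n ℂ}

lemma apply_self_eq_re (hM : M.PosSemidef) (i : n) : M i i = ((M i i).re : ℂ) :=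
  Complex.eq_re_of_ofReal_le (r := 0) (by simpa using hM.diag_nonneg)

lemma re_apply_self_nonneg (hM : M.PosSemidef) (i : n) : 0 ≤ (M i i).re :=
  (Complex.nonneg_iff.mp hM.diag_nonneg).1

lemma norm_apply_le_sqrt [Fintype n] (hM : M.PosSemidef) (i j : n) :
    ‖M i j‖ ≤ √((M i i).re * (M j j).re) := by
  have hdet := (hM.submatrix ![i, j]).det_nonneg
  simp only [det_fin_two, submatrix_apply, cons_val_zero, cons_val_one,
    ← hM.isHermitian.apply j i] at hdet
  rw [hM.apply_self_eq_re i, hM.apply_self_eq_re j, RCLike.star_def, Complex.mul_conj,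
    Complex.normSq_eq_norm_sq, ← Complex.ofReal_mul, ← Complex.ofReal_sub, Complex.zero_le_real,
    sub_nonneg] at hdet
  exact Real.le_sqrt_of_sq_le hdet

lemma re_mul_apply_self (hM : M.PosSemidef) (z : ℂ) (i : n) :
    (z * M i i).re = z.re * (M i i).re := by
  conv_lhs => rw [hM.apply_self_eq_re i, Complex.re_mul_ofReal]

end Matrix.PosSemidef

lemma eq_zero_of_mul_eq_mul_of_lt_of_le {a b A B : ℝ} (ha : 0 ≤ a) (hb : 0 ≤ b) (haA : a < A)
    (hbB : b ≤ B) (h : a * b = A * B) : b = 0 := by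
  nlinarith [mul_nonneg ha (sub_nonneg.mpr hbB)]

lemma ite_norm_mul_eq_ite_mul_ite {𝕜 : Type*} [NormedDivisionRing 𝕜] {x y : 𝕜} {a b : ℝ}
    (hx : ‖x‖ ≤ a) (hy : ‖y‖ ≤ b) :
    (if ‖x * y‖ = a * b then x * y else 0) =
      (if ‖x‖ = a then x else 0) * (if ‖y‖ = b then y else 0) := by
  by_cases hxa : ‖x‖ = a
  · by_cases hyb : ‖y‖ = b
    · simp [norm_mul, hxa, hyb]
    · rw [if_neg hyb, mul_zero, ite_eq_right_iff, norm_mul]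
      intro h
      have hx0 := eq_zero_of_mul_eq_mul_of_lt_of_le (norm_nonneg y) (norm_nonneg x)
        (hy.lt_of_ne hyb) hx (by rw [mul_comm, h, mul_comm])
      rw [norm_eq_zero.mp hx0, zero_mul]
  · rw [if_neg hxa, zero_mul, ite_eq_right_iff, norm_mul]
    intro h
    have hy0 := eq_zero_of_mul_eq_mul_of_lt_of_le (norm_nonneg x) (norm_nonneg y)
      (hx.lt_of_ne hxa) hy h
    rw [norm_eq_zero.mp hy0, mul_zero]

theorem trim_kronecker {m n : Type*} [Fintype m] [Fintype n] {A : Matrix m m ℂ}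
    {B : Matrix n n ℂ} (hA : A.PosSemidef) (hB : B.PosSemidef) :
    trim (A ⊗ₖ B) = trim A ⊗ₖ trim B := by
  ext ⟨i, j⟩ ⟨k, l⟩
  simp only [trim, of_apply, kroneckerMap_apply, hB.re_mul_apply_self,
    mul_mul_mul_comm _ (B j j).re,
    Real.sqrt_mul (mul_nonneg (hA.re_apply_self_nonneg i) (hA.re_apply_self_nonneg k))]
  exact ite_norm_mul_eq_ite_mul_ite (hA.norm_apply_le_sqrt i k) (hB.norm_apply_le_sqrt j l)

theorem stmt_10_general {d₁ d₂ : ℕ} (ρ : Matrix (Fin d₁) (Fin d₁) ℂ)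
    (σ : Matrix (Fin d₂) (Fin d₂) ℂ) (hρ : ρ.PosSemidef) (hσ : σ.PosSemidef) :
    trim (ρ ⊗ₖ σ) = trim ρ ⊗ₖ trim σ :=
  trim_kronecker hρ hσ

theorem stmt_10 {d₁ d₂ : ℕ} (ρ : Matrix (Fin d₁) (Fin d₁) ℂ)
    (σ : Matrix (Fin d₂) (Fin d₂) ℂ) (hρ : ρ.PosSemidef) (hσ : σ.PosSemidef)
    (hρtr : ρ.trace = 1) (hσtr : σ.trace = 1)
    (hρdiag : ∀ i, 0 < (ρ i i).re) (hσdiag : ∀ j, 0 < (σ j j).re) :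
    trim (ρ ⊗ₖ σ) = trim ρ ⊗ₖ trim σ :=
  stmt_10_general ρ σ hρ hσ
end

section
/- For density matrices ρ and σ with strictly positive diagonals, the quantity Q(ρ) := S(Δ(ρ)) − S(ρ̄) is additive: Q(ρ ⊗ σ) = Q(ρ) + Q(σ). -/
open scoped ComplexOrder

open Kronecker
open scoped Classical

noncomputable def vNEntropy {n : Type*} [Fintype n] [DecidableEq n]
    {A : Matrix n n ℂ} (hA : A.IsHermitian) : ℝ :=
  -∑ i, hA.eigenvalues i * Real.log (hA.eigenvalues i)

/-! Both the dephasing `Δ` and the trimming commute with `⊗ₖ`. For `Δ` this is immediate; for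
the trimming it comes from the bound `|ρᵢⱼ|² ≤ ρᵢᵢ ρⱼⱼ` (a nonnegative 2 × 2 principal minor): a
product of two entries can only attain the product of the two bounds if each factor attains its
own bound, or the product vanishes. The eigenvalues of `A ⊗ₖ B` are the products `λᵢ μⱼ` (compare
characteristic polynomials after diagonalising both factors), and since
`-x y log (x y) = -y x log x - x y log y`, the entropy of a Kronecker product of two trace-one
Hermitian matrices is the sum of the entropies. -/

open Polynomial

theorem ite_norm_mul_eq_mul_ite {α : Type*} [NormedDivisionRing α] {z w : α} {s t : ℝ}
    (hz : ‖z‖ ≤ s) (hw : ‖w‖ ≤ t) :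
    (if ‖z * w‖ = s * t then z * w else 0) =
      (if ‖z‖ = s then z else 0) * (if ‖w‖ = t then w else 0) := by
  rcases eq_or_ne z 0 with rfl | hz0
  · simp
  rcases eq_or_ne w 0 with rfl | hw0
  · simp
  have key : ‖z * w‖ = s * t ↔ ‖z‖ = s ∧ ‖w‖ = t := by
    rw [norm_mul]
    exact mul_eq_mul_iff_eq_and_eq_of_pos hz hw (norm_pos_iff.2 hz0)
      ((norm_pos_iff.2 hw0).trans_le hw)
  simp only [key]
  split_ifs <;> simp_all

namespace Matrix

variable {n m 𝕜 : Type*} [RCLike 𝕜]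

theorem PosSemidef.norm_apply_sq_le [Finite n] {A : Matrix n n 𝕜} (hA : A.PosSemidef) (i j : n) :
    ‖A i j‖ ^ 2 ≤ RCLike.re (A i i) * RCLike.re (A j j) := by
  have hdet := (hA.submatrix ![i, j]).det_nonneg
  rw [det_fin_two] at hdet
  simp only [submatrix_apply, cons_val_zero, cons_val_one] at hdet
  rw [← hA.1.apply j i, RCLike.star_def, RCLike.mul_conj, ← hA.1.coe_re_apply_self i,
    ← hA.1.coe_re_apply_self j] at hdet
  exact_mod_cast sub_nonneg.1 hdet

theorem PosSemidef.re_apply_self_nonneg_s11 {A : Matrix n n 𝕜} (hA : A.PosSemidef) (i : n) :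
    0 ≤ RCLike.re (A i i) :=
  (RCLike.nonneg_iff.1 hA.diag_nonneg).1

theorem diagonal_diag_kronecker {α : Type*} [MulZeroClass α] [DecidableEq n] [DecidableEq m]
    (A : Matrix n n α) (B : Matrix m m α) :
    diagonal (fun p => (A ⊗ₖ B) p p) = diagonal (fun i => A i i) ⊗ₖ diagonal (fun j => B j j) := by
  rw [diagonal_kronecker_diagonal]
  rfl

variable [Fintype n] [Fintype m] [DecidableEq n] [DecidableEq m]

theorem IsHermitian.eigenvalues_map_eq_of_charpoly_eq {A : Matrix n n 𝕜} (hA : A.IsHermitian)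
    {d : n → ℝ} (h : A.charpoly = ∏ i, (X - C (d i : 𝕜))) :
    Finset.univ.val.map hA.eigenvalues = Finset.univ.val.map d := by
  have hroots : (∏ i, (X - C (d i : 𝕜))).roots = Finset.univ.val.map (RCLike.ofReal ∘ d) := by
    rw [Polynomial.roots_prod]
    · simp
    · simp [Finset.prod_ne_zero_iff, X_sub_C_ne_zero]
  apply Multiset.map_injective (RCLike.ofReal_injective (K := 𝕜))
  rw [Multiset.map_map, Multiset.map_map, ← hA.roots_charpoly_eq_eigenvalues, h, hroots]

theorem IsHermitian.sum_eigenvalues_eq_of_charpoly_eq {M : Type*} [AddCommMonoid M]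
    {A : Matrix n n 𝕜} (hA : A.IsHermitian) {d : n → ℝ} (h : A.charpoly = ∏ i, (X - C (d i : 𝕜)))
    (f : ℝ → M) : ∑ i, f (hA.eigenvalues i) = ∑ i, f (d i) := by
  simpa only [Multiset.map_map, Finset.sum_map_val, Function.comp_apply] using
    congrArg (fun s => (s.map f).sum) (hA.eigenvalues_map_eq_of_charpoly_eq h)

theorem IsHermitian.sum_eigenvalues_eq_one {A : Matrix n n 𝕜} (hA : A.IsHermitian)
    (htr : A.trace = 1) : ∑ i, hA.eigenvalues i = 1 := by
  have h := hA.trace_eq_sum_eigenvalues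
  rw [htr] at h
  exact_mod_cast h.symm

theorem IsHermitian.charpoly_kronecker {A : Matrix n n 𝕜} {B : Matrix m m 𝕜}
    (hA : A.IsHermitian) (hB : B.IsHermitian) :
    (A ⊗ₖ B).charpoly =
      ∏ p : n × m, (X - C ((hA.eigenvalues p.1 * hB.eigenvalues p.2 : ℝ) : 𝕜)) := by
  have hUV : (star (hA.eigenvectorUnitary : Matrix n n 𝕜) ⊗ₖ
      star (hB.eigenvectorUnitary : Matrix m m 𝕜)) *
      ((hA.eigenvectorUnitary : Matrix n n 𝕜) ⊗ₖ (hB.eigenvectorUnitary : Matrix m m 𝕜)) = 1 := by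
    rw [← mul_kronecker_mul]
    simp
  conv_lhs => rw [hA.spectral_theorem, hB.spectral_theorem, Unitary.conjStarAlgAut_apply,
    Unitary.conjStarAlgAut_apply, mul_kronecker_mul, mul_kronecker_mul, charpoly_mul_comm,
    ← mul_assoc, hUV, one_mul, diagonal_kronecker_diagonal, charpoly_diagonal]
  simp

end Matrix

open Matrix

section Trim

variable {n m : Type*} [Fintype n] [Fintype m]

theorem trim_apply_self {ρ : Matrix n n ℂ} (hρ : ρ.PosSemidef) (i : n) : trim ρ i i = ρ i i := by
  have hre : 0 ≤ (ρ i i).re := hρ.re_apply_self_nonneg_s11 i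
  have hnorm : ‖ρ i i‖ = (ρ i i).re := by
    rw [← hρ.1.coe_re_apply_self i]
    simp [abs_of_nonneg hre]
  simp [trim, hnorm, Real.sqrt_mul_self hre]

theorem trace_trim {ρ : Matrix n n ℂ} (hρ : ρ.PosSemidef) : (trim ρ).trace = ρ.trace :=
  Finset.sum_congr rfl fun i _ => trim_apply_self hρ i

theorem trim_kronecker_s11 {ρ : Matrix n n ℂ} {σ : Matrix m m ℂ} (hρ : ρ.PosSemidef)
    (hσ : σ.PosSemidef) : trim (ρ ⊗ₖ σ) = trim ρ ⊗ₖ trim σ := by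
  ext ⟨i, k⟩ ⟨j, l⟩
  have hdiag (a : n) (b : m) : (ρ a a * σ b b).re = (ρ a a).re * (σ b b).re := by
    rw [← hρ.1.coe_re_apply_self, ← hσ.1.coe_re_apply_self]
    simp
  have hsqrt : √((ρ i i * σ k k).re * (ρ j j * σ l l).re) =
      √((ρ i i).re * (ρ j j).re) * √((σ k k).re * (σ l l).re) := by
    have hρi : 0 ≤ (ρ i i).re := hρ.re_apply_self_nonneg_s11 i
    have hρj : 0 ≤ (ρ j j).re := hρ.re_apply_self_nonneg_s11 j
    rw [hdiag, hdiag, ← Real.sqrt_mul (mul_nonneg hρi hρj)]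
    congr 1
    ring
  simp only [trim, of_apply, kronecker_apply, hsqrt]
  exact ite_norm_mul_eq_mul_ite (Real.le_sqrt_of_sq_le (hρ.norm_apply_sq_le i j))
    (Real.le_sqrt_of_sq_le (hσ.norm_apply_sq_le k l))

end Trim

section Entropy

variable {n m : Type*} [Fintype n] [Fintype m] [DecidableEq n] [DecidableEq m]

theorem vNEntropy_eq_sum_negMulLog {A : Matrix n n ℂ} (hA : A.IsHermitian) :
    vNEntropy hA = ∑ i, Real.negMulLog (hA.eigenvalues i) := by
  simp [vNEntropy, Real.negMulLog]

theorem vNEntropy_kronecker {A : Matrix n n ℂ} {B : Matrix m m ℂ} {C : Matrix (n × m) (n × m) ℂ}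
    (hA : A.IsHermitian) (hB : B.IsHermitian) (hC : C.IsHermitian) (hCAB : C = A ⊗ₖ B)
    (hAtr : A.trace = 1) (hBtr : B.trace = 1) :
    vNEntropy hC = vNEntropy hA + vNEntropy hB := by
  subst hCAB
  rw [vNEntropy_eq_sum_negMulLog, vNEntropy_eq_sum_negMulLog, vNEntropy_eq_sum_negMulLog,
    hC.sum_eigenvalues_eq_of_charpoly_eq (hA.charpoly_kronecker hB), Fintype.sum_prod_type]
  simp_rw [Real.negMulLog_mul, Finset.sum_add_distrib, ← Finset.mul_sum, ← Finset.sum_mul,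
    hA.sum_eigenvalues_eq_one hAtr, hB.sum_eigenvalues_eq_one hBtr, one_mul]

end Entropy

theorem stmt_11_general {d₁ d₂ : ℕ} (ρ : Matrix (Fin d₁) (Fin d₁) ℂ)
    (σ : Matrix (Fin d₂) (Fin d₂) ℂ) (hρ : ρ.PosSemidef) (hσ : σ.PosSemidef)
    (hρtr : ρ.trace = 1) (hσtr : σ.trace = 1)
    (hΔρ : (Matrix.diagonal fun i => ρ i i).IsHermitian)
    (hΔσ : (Matrix.diagonal fun j => σ j j).IsHermitian)
    (hΔρσ : (Matrix.diagonal fun p : Fin d₁ × Fin d₂ =>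
        (ρ ⊗ₖ σ) p p).IsHermitian)
    (htρ : (trim ρ).IsHermitian) (htσ : (trim σ).IsHermitian)
    (htρσ : (trim (ρ ⊗ₖ σ)).IsHermitian) :
    vNEntropy hΔρσ - vNEntropy htρσ =
      (vNEntropy hΔρ - vNEntropy htρ) + (vNEntropy hΔσ - vNEntropy htσ) := by
  rw [vNEntropy_kronecker hΔρ hΔσ hΔρσ (diagonal_diag_kronecker ρ σ)
      ((trace_diagonal _).trans hρtr) ((trace_diagonal _).trans hσtr),
    vNEntropy_kronecker htρ htσ htρσ (trim_kronecker_s11 hρ hσ)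
      ((trace_trim hρ).trans hρtr) ((trace_trim hσ).trans hσtr)]
  ring

theorem stmt_11 {d₁ d₂ : ℕ} (ρ : Matrix (Fin d₁) (Fin d₁) ℂ)
    (σ : Matrix (Fin d₂) (Fin d₂) ℂ) (hρ : ρ.PosSemidef) (hσ : σ.PosSemidef)
    (hρtr : ρ.trace = 1) (hσtr : σ.trace = 1)
    (hρdiag : ∀ i, 0 < (ρ i i).re) (hσdiag : ∀ j, 0 < (σ j j).re)
    (hΔρ : (Matrix.diagonal fun i => ρ i i).IsHermitian)
    (hΔσ : (Matrix.diagonal fun j => σ j j).IsHermitian)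
    (hΔρσ : (Matrix.diagonal fun p : Fin d₁ × Fin d₂ =>
        (ρ ⊗ₖ σ) p p).IsHermitian)
    (htρ : (trim ρ).IsHermitian) (htσ : (trim σ).IsHermitian)
    (htρσ : (trim (ρ ⊗ₖ σ)).IsHermitian) :
    vNEntropy hΔρσ - vNEntropy htρσ =
      (vNEntropy hΔρ - vNEntropy htρ) + (vNEntropy hΔσ - vNEntropy htσ) :=
  stmt_11_general ρ σ hρ hσ hρtr hσtr hΔρ hΔσ hΔρσ htρ htσ htρσ
end

section
/- Q(ρ) > 0 if and only if η(ρ) = 1; that is, the trimmed-state entropy difference is strictly positive iff there exist distinct indices i ≠ j with |ρ_{ij}| = √(ρ_{ii}ρ_{jj}) > 0. -/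
/-!
Write `ρ` as the Gram matrix of vectors `xᵢ`, so that `ρᵢᵢ = ‖xᵢ‖²` and, by the equality case of
Cauchy–Schwarz, `|ρᵢⱼ| = √(ρᵢᵢ ρⱼⱼ)` exactly when `xᵢ` and `xⱼ` span the same line. Trimming keeps
`ρ` only on the blocks of indices sharing a line. Each block is a rank-one matrix, so
`trim ρ = W Wᴴ`, where `W` has one column per line and `Wᴴ W` is diagonal with the block weights
`t_K = ∑_{i ∈ K} ‖xᵢ‖²`. Hence the nonzero spectrum of `trim ρ` is `{t_K}`, and
`Q(ρ) = ∑_K t_K log t_K - ∑ᵢ ‖xᵢ‖² log ‖xᵢ‖²`. Since `x log x` is strictly superadditive on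
positive reals, this is positive iff some block contains two indices, i.e. iff `η(ρ) = 1`.
-/

open scoped ComplexOrder

open scoped Classical

noncomputable def eta {n : Type*} [Fintype n] (A : Matrix n n ℂ) : ℝ :=
  sSup {x : ℝ | ∃ i j : n, i ≠ j ∧ A i i ≠ 0 ∧ A j j ≠ 0 ∧
    x = ‖A i j‖ / Real.sqrt ((A i i).re * (A j j).re)}

open Matrix
open scoped InnerProductSpace LinearAlgebra.Projectivization

open Polynomial in
lemma vNEntropy_eq_of_X_pow_mul_charpoly {n κ : Type*} [Fintype n] [DecidableEq n] [Fintype κ]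
    {A : Matrix n n ℂ} (hA : A.IsHermitian) (k m : ℕ) (t : κ → ℝ)
    (h : X ^ k * A.charpoly = X ^ m * ∏ K, (X - C (t K : ℂ))) :
    vNEntropy hA = -∑ K, t K * Real.log (t K) := by
  have hprod : ∏ K, (X - C (t K : ℂ)) ≠ 0 :=
    Finset.prod_ne_zero_iff.mpr fun K _ => X_sub_C_ne_zero _
  -- the powers of `X` only add zero eigenvalues, which contribute `0 * log 0 = 0`
  have hroots := congrArg roots h
  rw [roots_mul (mul_ne_zero (pow_ne_zero _ X_ne_zero) (charpoly_monic A).ne_zero),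
    roots_mul (mul_ne_zero (pow_ne_zero _ X_ne_zero) hprod), roots_X_pow, roots_X_pow,
    hA.roots_charpoly_eq_eigenvalues, roots_prod _ _ hprod] at hroots
  have := congrArg (fun s : Multiset ℂ => (s.map fun z => z.re * Real.log z.re).sum) hroots
  simpa [vNEntropy, Multiset.map_map, Function.comp_def, Multiset.map_nsmul, Multiset.sum_nsmul]
    using this

lemma Finset.sum_lt_sum_iff_of_le {ι M : Type*} [AddCommMonoid M] [PartialOrder M]
    [IsOrderedCancelAddMonoid M] {s : Finset ι} {f g : ι → M}
    (h : ∀ i ∈ s, f i ≤ g i) : ∑ i ∈ s, f i < ∑ i ∈ s, g i ↔ ∃ i ∈ s, f i < g i := by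
  rw [lt_iff_le_and_ne, and_iff_right (sum_le_sum h), Ne, sum_eq_sum_iff_of_le h]
  push Not
  exact exists_congr fun i => and_congr_right fun hi => (h i hi).lt_iff_ne.symm

section MulLog

open Real

variable {ι : Type*} {s : Finset ι} {p : ι → ℝ}

lemma mul_log_le_mul_log_sum (hp : ∀ i ∈ s, 0 < p i) {i : ι} (hi : i ∈ s) :
    p i * log (p i) ≤ p i * log (∑ j ∈ s, p j) :=
  mul_le_mul_of_nonneg_left
    (log_le_log (hp i hi) (Finset.single_le_sum (fun j hj => (hp j hj).le) hi)) (hp i hi).le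

lemma mul_log_lt_mul_log_sum_iff (hp : ∀ i ∈ s, 0 < p i) {i : ι} (hi : i ∈ s) :
    p i * log (p i) < p i * log (∑ j ∈ s, p j) ↔ ∃ j ∈ s, j ≠ i := by
  have hsum : 0 < ∑ j ∈ s, p j := Finset.sum_pos hp ⟨i, hi⟩
  rw [mul_lt_mul_iff_right₀ (hp i hi), log_lt_log_iff (hp i hi) hsum,
    ← Finset.add_sum_erase s p hi, lt_add_iff_pos_right,
    Finset.sum_pos_iff_of_nonneg fun j hj => (hp j (Finset.mem_of_mem_erase hj)).le]
  simp only [Finset.mem_erase]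
  exact ⟨fun ⟨j, ⟨hji, hj⟩, _⟩ => ⟨j, hj, hji⟩, fun ⟨j, hj, hji⟩ => ⟨j, ⟨hji, hj⟩, hp j hj⟩⟩

lemma sum_mul_log_lt_mul_log_sum_iff (hp : ∀ i ∈ s, 0 < p i) :
    ∑ i ∈ s, p i * log (p i) < (∑ i ∈ s, p i) * log (∑ i ∈ s, p i) ↔ ∃ i ∈ s, ∃ j ∈ s, j ≠ i := by
  rw [Finset.sum_mul, Finset.sum_lt_sum_iff_of_le fun i hi => mul_log_le_mul_log_sum hp hi]
  exact exists_congr fun i => and_congr_right fun hi => mul_log_lt_mul_log_sum_iff hp hi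

lemma sum_mul_log_le_mul_log_sum (hp : ∀ i ∈ s, 0 < p i) :
    ∑ i ∈ s, p i * log (p i) ≤ (∑ i ∈ s, p i) * log (∑ i ∈ s, p i) := by
  rw [Finset.sum_mul]
  exact Finset.sum_le_sum fun i hi => mul_log_le_mul_log_sum hp hi

lemma sum_mul_log_lt_sum_fiberwise_iff {κ : Type*} [Fintype ι] [Fintype κ] [DecidableEq κ]
    (c : ι → κ) (hp : ∀ i, 0 < p i) :
    ∑ i, p i * log (p i) < ∑ k, (∑ i with c i = k, p i) * log (∑ i with c i = k, p i) ↔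
      ∃ i j, i ≠ j ∧ c i = c j := by
  rw [← Finset.sum_fiberwise Finset.univ c,
    Finset.sum_lt_sum_iff_of_le fun k _ => sum_mul_log_le_mul_log_sum fun i _ => hp i]
  simp_rw [sum_mul_log_lt_mul_log_sum_iff fun i _ => hp i]
  simp only [Finset.mem_univ, Finset.mem_filter, true_and]
  constructor
  · rintro ⟨k, i, rfl, j, hj, hji⟩
    exact ⟨j, i, hji, hj⟩
  · rintro ⟨i, j, hij, hc⟩
    exact ⟨c i, j, hc.symm, i, rfl, hij⟩

end MulLog

section Gram

variable {𝕜 E : Type*} [RCLike 𝕜] [NormedAddCommGroup E] [InnerProductSpace 𝕜 E]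

lemma inner_eq_inner_mul_inner_of_mem_span {e v w : E} (he : ‖e‖ = 1) (hv : v ∈ 𝕜 ∙ e)
    (hw : w ∈ 𝕜 ∙ e) : ⟪v, w⟫_𝕜 = ⟪v, e⟫_𝕜 * ⟪e, w⟫_𝕜 := by
  obtain ⟨a, rfl⟩ := Submodule.mem_span_singleton.mp hv
  obtain ⟨b, rfl⟩ := Submodule.mem_span_singleton.mp hw
  simp [inner_smul_left, inner_smul_right, inner_self_eq_norm_sq_to_K, he]
  ring

lemma norm_inner_eq_norm_of_mem_span {e v : E} (he : ‖e‖ = 1) (hv : v ∈ 𝕜 ∙ e) :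
    ‖⟪v, e⟫_𝕜‖ = ‖v‖ := by
  obtain ⟨a, rfl⟩ := Submodule.mem_span_singleton.mp hv
  simp [inner_smul_left, inner_self_eq_norm_sq_to_K, he, norm_smul]

lemma norm_inner_eq_norm_mul_norm_iff_mk_eq {v w : E} (hv : v ≠ 0) (hw : w ≠ 0) :
    ‖⟪v, w⟫_𝕜‖ = ‖v‖ * ‖w‖ ↔ Projectivization.mk 𝕜 v hv = Projectivization.mk 𝕜 w hw := by
  rw [norm_inner_eq_norm_iff hv hw, eq_comm, Projectivization.mk_eq_mk_iff' 𝕜 w v hw hv]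
  constructor
  · rintro ⟨r, -, rfl⟩
    exact ⟨r, rfl⟩
  · rintro ⟨r, rfl⟩
    exact ⟨r, fun hr => hw (by simp [hr]), rfl⟩

noncomputable def Projectivization.unitRep (K : ℙ 𝕜 E) : E := (‖K.rep‖⁻¹ : 𝕜) • K.rep

lemma Projectivization.norm_unitRep (K : ℙ 𝕜 E) : ‖K.unitRep‖ = 1 :=
  norm_smul_inv_norm K.rep_nonzero

lemma Projectivization.span_unitRep (K : ℙ 𝕜 E) : 𝕜 ∙ K.unitRep = K.submodule := by
  rw [unitRep, Submodule.span_singleton_smul_eq (by simp [K.rep_nonzero]),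
    ← submodule_mk _ K.rep_nonzero, mk_rep]

end Gram

section FiberFactor

variable {𝕜 n κ E : Type*} [RCLike 𝕜] [DecidableEq κ] [NormedAddCommGroup E]
  [InnerProductSpace 𝕜 E] {x : n → E} {c : n → κ} {e : κ → E}

variable (𝕜) in
noncomputable def fiberFactor (x : n → E) (c : n → κ) (e : κ → E) : Matrix n κ 𝕜 :=
  of fun i k => if c i = k then ⟪x i, e k⟫_𝕜 else 0

lemma fiberFactor_mul_conjTranspose [Fintype κ] (he : ∀ k, ‖e k‖ = 1)
    (hx : ∀ i, x i ∈ 𝕜 ∙ e (c i)) :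
    fiberFactor 𝕜 x c e * (fiberFactor 𝕜 x c e)ᴴ =
      of fun i j => if c i = c j then ⟪x i, x j⟫_𝕜 else 0 := by
  ext i j
  simp only [fiberFactor, mul_apply, of_apply, conjTranspose_apply, RCLike.star_def, ite_mul,
    zero_mul, Finset.sum_ite_eq, Finset.mem_univ, ↓reduceIte]
  rcases eq_or_ne (c i) (c j) with hij | hij
  · rw [if_pos hij.symm, if_pos hij, inner_conj_symm,
      inner_eq_inner_mul_inner_of_mem_span (he _) (hx i) (hij ▸ hx j : x j ∈ 𝕜 ∙ e (c i))]
  · simp [hij, hij.symm]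

lemma conjTranspose_mul_fiberFactor [Fintype n] (he : ∀ k, ‖e k‖ = 1)
    (hx : ∀ i, x i ∈ 𝕜 ∙ e (c i)) :
    (fiberFactor 𝕜 x c e)ᴴ * fiberFactor 𝕜 x c e =
      diagonal fun k => ((∑ i with c i = k, ‖x i‖ ^ 2 : ℝ) : 𝕜) := by
  ext k l
  simp only [fiberFactor, mul_apply, conjTranspose_apply, of_apply, diagonal_apply]
  split_ifs with hkl
  · subst hkl
    push_cast
    rw [Finset.sum_filter]
    refine Finset.sum_congr rfl fun i _ => ?_
    split_ifs with hi
    · rw [RCLike.star_def, RCLike.conj_mul, ← hi, norm_inner_eq_norm_of_mem_span (he _) (hx i)]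
    · simp
  · refine Finset.sum_eq_zero fun i _ => ?_
    split_ifs with hk hl <;> simp_all

end FiberFactor

open Polynomial in
lemma vNEntropy_eq_of_eq_fiberGram {n κ E : Type*} [Fintype n] [DecidableEq n] [Fintype κ]
    [DecidableEq κ] [NormedAddCommGroup E] [InnerProductSpace ℂ E] {x : n → E} {c : n → κ}
    {e : κ → E} {A : Matrix n n ℂ} (hA : A.IsHermitian) (he : ∀ k, ‖e k‖ = 1)
    (hx : ∀ i, x i ∈ ℂ ∙ e (c i))
    (hAx : A = of fun i j => if c i = c j then ⟪x i, x j⟫_ℂ else 0) :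
    vNEntropy hA =
      -∑ k, (∑ i with c i = k, ‖x i‖ ^ 2) * Real.log (∑ i with c i = k, ‖x i‖ ^ 2) := by
  refine vNEntropy_eq_of_X_pow_mul_charpoly hA (Fintype.card κ) (Fintype.card n) _ ?_
  rw [hAx, ← fiberFactor_mul_conjTranspose (𝕜 := ℂ) he hx, charpoly_mul_comm',
    conjTranspose_mul_fiberFactor he hx, charpoly_diagonal]
  rfl

lemma Matrix.PosSemidef.exists_eq_gram {n : Type*} [Fintype n] {ρ : Matrix n n ℂ}
    (hρ : ρ.PosSemidef) : ∃ x : n → EuclideanSpace ℂ n, ρ = gram ℂ x := by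
  obtain ⟨B, rfl⟩ : ∃ B : Matrix n n ℂ, ρ = star B * B := by
    open scoped MatrixOrder in exact CStarAlgebra.nonneg_iff_eq_star_mul_self.mp hρ.nonneg
  refine ⟨fun j => WithLp.toLp 2 fun k => B k j, ?_⟩
  rw [gram_eq_conjTranspose_mul (EuclideanSpace.basisFun n ℂ)]
  rfl

section GramTrim

variable {n E : Type*} [NormedAddCommGroup E] [InnerProductSpace ℂ E] {x : n → E}

lemma re_gram_apply_self (x : n → E) (i : n) : (gram ℂ x i i).re = ‖x i‖ ^ 2 := by
  rw [gram_apply]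
  exact inner_self_eq_norm_sq (𝕜 := ℂ) _

lemma sqrt_re_gram_mul_re_gram (x : n → E) (i j : n) :
    √((gram ℂ x i i).re * (gram ℂ x j j).re) = ‖x i‖ * ‖x j‖ := by
  rw [re_gram_apply_self, re_gram_apply_self, ← mul_pow, Real.sqrt_sq (by positivity)]

lemma norm_gram_eq_sqrt_iff_mk_eq (hx : ∀ i, x i ≠ 0) (i j : n) :
    ‖gram ℂ x i j‖ = √((gram ℂ x i i).re * (gram ℂ x j j).re) ↔
      Projectivization.mk ℂ (x i) (hx i) = Projectivization.mk ℂ (x j) (hx j) := by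
  rw [sqrt_re_gram_mul_re_gram, gram_apply, norm_inner_eq_norm_mul_norm_iff_mk_eq]

lemma trim_gram [Fintype n] (hx : ∀ i, x i ≠ 0) :
    trim (gram ℂ x) = of fun i j => if Projectivization.mk ℂ (x i) (hx i) =
      Projectivization.mk ℂ (x j) (hx j) then ⟪x i, x j⟫_ℂ else 0 := by
  ext i j
  simp only [trim, of_apply, norm_gram_eq_sqrt_iff_mk_eq hx]
  simp only [gram_apply]

lemma vNEntropy_trim_gram [Fintype n] [DecidableEq n] (hx : ∀ i, x i ≠ 0)
    (ht : (trim (gram ℂ x)).IsHermitian) :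
    let c := Set.rangeFactorization fun i => Projectivization.mk ℂ (x i) (hx i)
    vNEntropy ht =
      -∑ k, (∑ i with c i = k, ‖x i‖ ^ 2) * Real.log (∑ i with c i = k, ‖x i‖ ^ 2) := by
  refine vNEntropy_eq_of_eq_fiberGram ht (e := fun k : Set.range _ => (k : ℙ ℂ E).unitRep)
    (fun k => Projectivization.norm_unitRep _) (fun i => ?_) ?_
  · simp [Set.rangeFactorization, Projectivization.span_unitRep, Projectivization.submodule_mk,
      Submodule.mem_span_singleton_self]
  · simp [trim_gram hx, Set.rangeFactorization, Subtype.ext_iff]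

open Polynomial in
lemma vNEntropy_diagonal_gram [Fintype n] [DecidableEq n] (x : n → E)
    (hΔ : (diagonal fun i => gram ℂ x i i).IsHermitian) :
    vNEntropy hΔ = -∑ i, ‖x i‖ ^ 2 * Real.log (‖x i‖ ^ 2) := by
  refine vNEntropy_eq_of_X_pow_mul_charpoly hΔ 0 0 _ ?_
  simp [charpoly_diagonal, gram_apply, inner_self_eq_norm_sq_to_K]

end GramTrim

lemma eta_eq_one_iff {n : Type*} [Fintype n] {ρ : Matrix n n ℂ} (hdiag : ∀ i, 0 < (ρ i i).re)
    (hle : ∀ i j, ‖ρ i j‖ ≤ √((ρ i i).re * (ρ j j).re)) :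
    eta ρ = 1 ↔ ∃ i j, i ≠ j ∧ ‖ρ i j‖ = √((ρ i i).re * (ρ j j).re) := by
  set S := {y : ℝ | ∃ i j : n, i ≠ j ∧ ρ i i ≠ 0 ∧ ρ j j ≠ 0 ∧
    y = ‖ρ i j‖ / √((ρ i i).re * (ρ j j).re)}
  have hsqrt : ∀ i j, 0 < √((ρ i i).re * (ρ j j).re) := fun i j =>
    Real.sqrt_pos.mpr (mul_pos (hdiag i) (hdiag j))
  have hne : ∀ i, ρ i i ≠ 0 := fun i h => (hdiag i).ne' (by simp [h])
  have hS_le : ∀ y ∈ S, y ≤ 1 := by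
    rintro y ⟨i, j, -, -, -, rfl⟩
    exact (div_le_one (hsqrt i j)).mpr (hle i j)
  have hS_finite : S.Finite := by
    refine (Set.finite_range fun ij : n × n =>
      ‖ρ ij.1 ij.2‖ / √((ρ ij.1 ij.1).re * (ρ ij.2 ij.2).re)).subset ?_
    rintro y ⟨i, j, -, -, -, rfl⟩
    exact ⟨(i, j), rfl⟩
  have hmem : (1 : ℝ) ∈ S ↔ ∃ i j, i ≠ j ∧ ‖ρ i j‖ = √((ρ i i).re * (ρ j j).re) := by
    simp only [S, Set.mem_ofPred_eq, eq_comm (a := (1 : ℝ)), div_eq_one_iff_eq (hsqrt _ _).ne', hne,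
      ne_eq, not_false_eq_true, true_and]
  rw [show eta ρ = sSup S from rfl, ← hmem]
  refine ⟨fun h => ?_, fun h => IsGreatest.csSup_eq ⟨h, hS_le⟩⟩
  have hS : S.Nonempty := Set.nonempty_iff_ne_empty.mpr fun hS => by simp [hS] at h
  exact h ▸ hS.csSup_mem hS_finite

theorem stmt_13_general {d : ℕ} (ρ : Matrix (Fin d) (Fin d) ℂ) (hρ : ρ.PosSemidef)
    (hdiag : ∀ i, 0 < (ρ i i).re)
    (hΔ : (Matrix.diagonal fun i => ρ i i).IsHermitian)
    (ht : (trim ρ).IsHermitian) :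
    0 < vNEntropy hΔ - vNEntropy ht ↔ eta ρ = 1 := by
  obtain ⟨x, rfl⟩ := hρ.exists_eq_gram
  have hx : ∀ i, x i ≠ 0 := fun i hxi => by simpa [re_gram_apply_self, hxi] using hdiag i
  rw [vNEntropy_diagonal_gram, vNEntropy_trim_gram hx, neg_sub_neg, sub_pos,
    sum_mul_log_lt_sum_fiberwise_iff _ fun i => pow_pos (norm_pos_iff.mpr (hx i)) 2,
    eta_eq_one_iff hdiag fun i j => ?_]
  · simp only [Set.rangeFactorization_eq_rangeFactorization_iff, norm_gram_eq_sqrt_iff_mk_eq hx]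
  · rw [sqrt_re_gram_mul_re_gram, gram_apply]
    exact norm_inner_le_norm _ _

theorem stmt_13 {d : ℕ} (ρ : Matrix (Fin d) (Fin d) ℂ) (hρ : ρ.PosSemidef)
    (htr : ρ.trace = 1) (hdiag : ∀ i, 0 < (ρ i i).re)
    (hΔ : (Matrix.diagonal fun i => ρ i i).IsHermitian)
    (ht : (trim ρ).IsHermitian) :
    0 < vNEntropy hΔ - vNEntropy ht ↔ eta ρ = 1 :=
  stmt_13_general ρ hρ hdiag hΔ ht
end
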